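/- Let τ > 0 and z, k ∈ ℝ, and define the Black-Scholes call price u^BS(σ) = e^z Φ(d₊(σ)) − e^k Φ(d₋(σ)) for σ > 0, where d±(σ) = (z − k ± σ²τ/2)/(σ√τ) and Φ is the standard normal CDF. Then for every real u with max(e^z − e^k, 0) < u < e^z, there exists a unique σ > 0 such that u^BS(σ) = u. -/

import Mathlib

/-!
In terms of the total volatility `s = σ√τ` and `m = z - k`, the call price is
`e^z Φ(d₊) - e^k Φ(d₋)` with `d± = m/s ± s/2`. Completing the square gives `e^k φ(d₋) = e^z φ(d₊)`,
so the price has `s`-derivative `e^z φ(d₊) (d₊' - d₋') = e^z φ(d₊) > 0`.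
As `s → ∞` the price tends to `e^z`, and as `s → 0⁺` the arguments of `Φ` both tend to `+∞`, `0` or `-∞`
according to the sign of `m`, so it tends to `max (e^z - e^k) 0`. Strict monotonicity and the
intermediate value theorem give exactly one `σ` for each price strictly between these limits.
-/

open Real

/-- The standard normal CDF. -/
noncomputable def normCDF (x : ℝ) : ℝ :=
  ∫ t in Set.Iic x, (2 * π) ^ (-(1 : ℝ) / 2) * Real.exp (-t ^ 2 / 2)

/-- The Black-Scholes call price as a function of volatility `σ`. -/
noncomputable def uBS (τ z k σ : ℝ) : ℝ :=
  Real.exp z * normCDF ((z - k + σ ^ 2 * τ / 2) / (σ * Real.sqrt τ))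
    - Real.exp k * normCDF ((z - k - σ ^ 2 * τ / 2) / (σ * Real.sqrt τ))

open MeasureTheory ProbabilityTheory Filter Set Topology

lemma hasDerivAt_integral_Iic {E : Type*} [NormedAddCommGroup E] [NormedSpace ℝ E]
    [CompleteSpace E] {f : ℝ → E} (hf : Integrable f) {x : ℝ} (hx : ContinuousAt f x) :
    HasDerivAt (fun y ↦ ∫ t in Iic y, f t) (f x) x := by
  have h := intervalIntegral.integral_hasDerivAt_right (a := 0) hf.intervalIntegrable
    hf.aestronglyMeasurable.stronglyMeasurableAtFilter hx
  refine (h.const_add (∫ t in Iic 0, f t)).congr_of_eventuallyEq (.of_forall fun y ↦ ?_)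
  dsimp only
  rw [← intervalIntegral.integral_Iic_sub_Iic hf.integrableOn hf.integrableOn]
  abel

lemma normCDF_eq_integral_gaussianPDFReal (x : ℝ) :
    normCDF x = ∫ t in Iic x, gaussianPDFReal 0 1 t := by
  refine setIntegral_congr_fun measurableSet_Iic fun t _ ↦ ?_
  rw [gaussianPDFReal, sqrt_eq_rpow, ← rpow_neg (by positivity)]
  norm_num

lemma normCDF_eq_cdf_gaussianReal : normCDF = cdf (gaussianReal 0 1) := by
  ext x
  rw [cdf_eq_real, measureReal_def, gaussianReal_apply_eq_integral _ one_ne_zero,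
    ENNReal.toReal_ofReal (setIntegral_nonneg measurableSet_Iic fun t _ ↦
      gaussianPDFReal_nonneg _ _ t), normCDF_eq_integral_gaussianPDFReal]

lemma continuous_gaussianPDFReal (μ : ℝ) (v : NNReal) : Continuous (gaussianPDFReal μ v) := by
  unfold gaussianPDFReal; fun_prop

lemma hasDerivAt_normCDF (x : ℝ) : HasDerivAt normCDF (gaussianPDFReal 0 1 x) x := by
  rw [funext normCDF_eq_integral_gaussianPDFReal]
  exact hasDerivAt_integral_Iic (integrable_gaussianPDFReal 0 1)
    (continuous_gaussianPDFReal 0 1).continuousAt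

lemma continuous_normCDF : Continuous normCDF :=
  continuous_iff_continuousAt.2 fun x ↦ (hasDerivAt_normCDF x).continuousAt

lemma tendsto_normCDF_atTop : Tendsto normCDF atTop (𝓝 1) :=
  normCDF_eq_cdf_gaussianReal ▸ tendsto_cdf_atTop _

lemma tendsto_normCDF_atBot : Tendsto normCDF atBot (𝓝 0) :=
  normCDF_eq_cdf_gaussianReal ▸ tendsto_cdf_atBot _

noncomputable def bsCall (z k s : ℝ) : ℝ :=
  exp z * normCDF ((z - k) / s + s / 2) - exp k * normCDF ((z - k) / s - s / 2)

lemma add_sq_half_div (a s : ℝ) : (a + s ^ 2 / 2) / s = a / s + s / 2 := by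
  rcases eq_or_ne s 0 with rfl | hs
  · simp
  · field_simp

lemma sub_sq_half_div (a s : ℝ) : (a - s ^ 2 / 2) / s = a / s - s / 2 := by
  rcases eq_or_ne s 0 with rfl | hs
  · simp
  · field_simp

lemma uBS_eq_bsCall_comp {τ : ℝ} (hτ : 0 ≤ τ) (z k : ℝ) :
    uBS τ z k = bsCall z k ∘ (· * √τ) := by
  ext σ
  have hvar : σ ^ 2 * τ = (σ * √τ) ^ 2 := by rw [mul_pow, sq_sqrt hτ]
  simp only [uBS, bsCall, Function.comp_apply, hvar, add_sq_half_div, sub_sq_half_div]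

lemma exp_mul_gaussianPDFReal_sub_half (z k : ℝ) {s : ℝ} (hs : s ≠ 0) :
    exp k * gaussianPDFReal 0 1 ((z - k) / s - s / 2)
      = exp z * gaussianPDFReal 0 1 ((z - k) / s + s / 2) := by
  simp only [gaussianPDFReal, NNReal.coe_one, mul_left_comm (exp _), ← exp_add]
  congr 2
  field_simp
  ring

lemma hasDerivAt_bsCall (z k : ℝ) {s : ℝ} (hs : s ≠ 0) :
    HasDerivAt (bsCall z k) (exp z * gaussianPDFReal 0 1 ((z - k) / s + s / 2)) s := by
  have hm : HasDerivAt (fun s ↦ (z - k) / s) (-(z - k) / s ^ 2) s := by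
    simpa only [div_eq_mul_inv, neg_mul, mul_neg] using (hasDerivAt_inv hs).const_mul (z - k)
  have hh : HasDerivAt (fun s : ℝ ↦ s / 2) (1 / 2) s := (hasDerivAt_id s).div_const 2
  have hplus := ((hasDerivAt_normCDF _).comp s (hm.add hh)).const_mul (exp z)
  have hminus := ((hasDerivAt_normCDF _).comp s (hm.sub hh)).const_mul (exp k)
  refine (hplus.sub hminus).congr_deriv ?_
  simp only [Pi.add_apply, Pi.sub_apply]
  rw [← mul_assoc (exp k), exp_mul_gaussianPDFReal_sub_half z k hs]
  ring

lemma continuousOn_bsCall (z k : ℝ) : ContinuousOn (bsCall z k) (Ioi 0) :=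
  fun _ hs ↦ (hasDerivAt_bsCall z k (ne_of_gt hs)).continuousAt.continuousWithinAt

lemma strictMonoOn_bsCall (z k : ℝ) : StrictMonoOn (bsCall z k) (Ioi 0) := by
  refine strictMonoOn_of_deriv_pos (convex_Ioi 0) (continuousOn_bsCall z k) fun s hs ↦ ?_
  rw [interior_Ioi] at hs
  rw [(hasDerivAt_bsCall z k (ne_of_gt hs)).deriv]
  exact mul_pos (exp_pos z) (gaussianPDFReal_pos _ _ _ one_ne_zero)

lemma tendsto_bsCall {z k a b : ℝ} {l : Filter ℝ}
    (hplus : Tendsto (fun s ↦ normCDF ((z - k) / s + s / 2)) l (𝓝 a))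
    (hminus : Tendsto (fun s ↦ normCDF ((z - k) / s - s / 2)) l (𝓝 b)) :
    Tendsto (bsCall z k) l (𝓝 (exp z * a - exp k * b)) :=
  (hplus.const_mul _).sub (hminus.const_mul _)

lemma tendsto_bsCall_atTop (z k : ℝ) : Tendsto (bsCall z k) atTop (𝓝 (exp z)) := by
  have hm : Tendsto (fun s : ℝ ↦ (z - k) / s) atTop (𝓝 0) :=
    tendsto_const_nhds.div_atTop tendsto_id
  have hh : Tendsto (fun s : ℝ ↦ s / 2) atTop atTop := tendsto_id.atTop_div_const two_pos
  have hminus : Tendsto (fun s : ℝ ↦ (z - k) / s - s / 2) atTop atBot := by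
    simpa only [sub_eq_add_neg, Function.comp_def] using
      hm.add_atBot (tendsto_neg_atTop_atBot.comp hh)
  simpa using tendsto_bsCall (tendsto_normCDF_atTop.comp (hm.add_atTop hh))
    (tendsto_normCDF_atBot.comp hminus)

lemma tendsto_bsCall_nhdsGT_zero (z k : ℝ) :
    Tendsto (bsCall z k) (𝓝[>] 0) (𝓝 (max (exp z - exp k) 0)) := by
  have hh : Tendsto (fun s : ℝ ↦ s / 2) (𝓝[>] 0) (𝓝 0) := by
    simpa using (tendsto_id.div_const 2).mono_left (nhdsWithin_le_nhds (a := (0 : ℝ)))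
  have hh' : Tendsto (fun s : ℝ ↦ -(s / 2)) (𝓝[>] 0) (𝓝 0) := by simpa using hh.neg
  rcases lt_trichotomy z k with hzk | rfl | hzk
  · have hm : Tendsto (fun s : ℝ ↦ (z - k) / s) (𝓝[>] 0) atBot := by
      simpa [div_eq_mul_inv] using tendsto_inv_nhdsGT_zero.const_mul_atTop_of_neg (sub_neg.2 hzk)
    have hminus : Tendsto (fun s : ℝ ↦ (z - k) / s - s / 2) (𝓝[>] 0) atBot := by
      simpa only [sub_eq_add_neg] using hm.atBot_add hh'
    rw [max_eq_right (sub_nonpos.2 (exp_le_exp.2 hzk.le))]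
    simpa using tendsto_bsCall (tendsto_normCDF_atBot.comp (hm.atBot_add hh))
      (tendsto_normCDF_atBot.comp hminus)
  · have hplus : Tendsto (fun s : ℝ ↦ (z - z) / s + s / 2) (𝓝[>] 0) (𝓝 0) := by simpa using hh
    have hminus : Tendsto (fun s : ℝ ↦ (z - z) / s - s / 2) (𝓝[>] 0) (𝓝 0) := by
      simpa [neg_div] using hh'
    simpa using tendsto_bsCall ((continuous_normCDF.tendsto 0).comp hplus)
      ((continuous_normCDF.tendsto 0).comp hminus)
  · have hm : Tendsto (fun s : ℝ ↦ (z - k) / s) (𝓝[>] 0) atTop := by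
      simpa [div_eq_mul_inv] using tendsto_inv_nhdsGT_zero.const_mul_atTop (sub_pos.2 hzk)
    have hminus : Tendsto (fun s : ℝ ↦ (z - k) / s - s / 2) (𝓝[>] 0) atTop := by
      simpa only [sub_eq_add_neg] using hm.atTop_add hh'
    rw [max_eq_left (sub_nonneg.2 (exp_le_exp.2 hzk.le))]
    simpa using tendsto_bsCall (tendsto_normCDF_atTop.comp (hm.atTop_add hh))
      (tendsto_normCDF_atTop.comp hminus)

lemma existsUnique_eq_of_strictMonoOn_Ioi {α δ : Type*} [ConditionallyCompleteLinearOrder α]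
    [TopologicalSpace α] [OrderTopology α] [DenselyOrdered α] [NoMaxOrder α] [LinearOrder δ]
    [TopologicalSpace δ] [OrderClosedTopology δ] {f : α → δ} {c : α} {a b u : δ}
    (hcont : ContinuousOn f (Ioi c)) (hmono : StrictMonoOn f (Ioi c))
    (hc : Tendsto f (𝓝[>] c) (𝓝 a)) (htop : Tendsto f atTop (𝓝 b)) (hau : a < u) (hub : u < b) :
    ∃! x, c < x ∧ f x = u := by
  obtain ⟨x₁, hx₁u, hx₁c⟩ := ((hc.eventually_lt_const hau).and self_mem_nhdsWithin).exists
  obtain ⟨x₂, hx₂u, hx₁₂⟩ := ((htop.eventually_const_lt hub).and (eventually_gt_atTop x₁)).exists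
  have hsub : Icc x₁ x₂ ⊆ Ioi c := fun x hx ↦ lt_of_lt_of_le hx₁c hx.1
  obtain ⟨x, hx, hfx⟩ :=
    intermediate_value_Icc hx₁₂.le (hcont.mono hsub) ⟨hx₁u.le, hx₂u.le⟩
  exact ⟨x, ⟨hsub hx, hfx⟩, fun y ⟨hy, hfy⟩ ↦ hmono.injOn hy (hsub hx) (hfy.trans hfx.symm)⟩

theorem implied_volatility_well_defined
    (τ z k : ℝ) (hτ : 0 < τ) :
    ∀ u : ℝ, max (Real.exp z - Real.exp k) 0 < u → u < Real.exp z →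
      ∃! σ : ℝ, 0 < σ ∧ uBS τ z k σ = u := by
  intro u hlow hhigh
  have hscale : StrictMono (· * √τ) := strictMono_mul_right_of_pos (sqrt_pos.2 hτ)
  have hmaps : MapsTo (· * √τ) (Ioi 0) (Ioi 0) := fun σ hσ ↦ mul_pos hσ (sqrt_pos.2 hτ)
  have hzero : Tendsto (· * √τ) (𝓝[>] 0) (𝓝[>] 0) := by
    simpa using (continuous_mul_const √τ).continuousWithinAt.tendsto_nhdsWithin (x := 0) hmaps
  rw [uBS_eq_bsCall_comp hτ.le]
  exact existsUnique_eq_of_strictMonoOn_Ioi ((continuousOn_bsCall z k).comp (by fun_prop) hmaps)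
    ((strictMonoOn_bsCall z k).comp (hscale.strictMonoOn _) hmaps)
    ((tendsto_bsCall_nhdsGT_zero z k).comp hzero)
    ((tendsto_bsCall_atTop z k).comp (tendsto_id.atTop_mul_const (sqrt_pos.2 hτ))) hlow hhigh
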